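/- arXiv:2409.01843 — 2 statements merged into one kernel-verified Lean document; each statement's English description precedes it below -/
import Mathlib

section
/- Let V satisfy dV/dt = δ(t)·V(t) + P(t) − μ(t)·(S(t) − V(t)) with V(0)=0, V(n)=M, and let V* satisfy dV*/dt = δ(t)·V*(t) + P*(t) − μ(t)·(S(t) − V*(t)) − ν(t)·(C(t) − V*(t)) with V*(0)=0, V*(n)=M. Define emerging surplus rates under experience lapse rate ν': W(t) = −ν'(t)·(C(t) − V(t)) and W*(t) = (P(t) − P*(t)) − (ν'(t) − ν(t))·(C(t) − V*(t)). With φ(t) = exp(−∫₀ᵗ (δ(r) + μ(r) + ν'(r)) dr), the expected present values of surplus under the two valuation bases coincide: ∫₀ⁿ φ(t)·W(t) dt = ∫₀ⁿ φ(t)·W*(t) dt. -/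
open Set intervalIntegral

/-!
Put `G = φ (V - V*)`. Since `φ' = -(δ + μ + ν') φ`, Thiele's equations for `V` and `V*` give
`G' = φ W* - φ W`, and `G` vanishes at both ends because `V` and `V*` agree at `0` and at `n`.
Integrating `G'` over `[0, n]` gives the claim.
-/

lemma integral_eq_integral_of_hasDerivAt_sub {f₁ f₂ G : ℝ → ℝ} {a b : ℝ} (hab : a ≤ b)
    (hG : ContinuousOn G (Icc a b)) (hG' : ∀ t ∈ Ioo a b, HasDerivAt G (f₂ t - f₁ t) t)
    (hGab : G a = G b) (hf₁ : IntervalIntegrable f₁ MeasureTheory.volume a b)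
    (hf₂ : IntervalIntegrable f₂ MeasureTheory.volume a b) :
    ∫ t in a..b, f₁ t = ∫ t in a..b, f₂ t := by
  have hFTC := integral_eq_sub_of_hasDerivAt_of_le hab hG hG' (hf₂.sub hf₁)
  rw [integral_sub hf₂ hf₁, hGab, sub_self] at hFTC
  exact (sub_eq_zero.1 hFTC).symm

lemma continuousOn_exp_neg_integral {f : ℝ → ℝ} {a b : ℝ} (hab : a ≤ b)
    (hf : ContinuousOn f (Icc a b)) :
    ContinuousOn (fun u => Real.exp (-∫ r in a..u, f r)) (Icc a b) := by
  have hprim := continuousOn_primitive_interval (μ := MeasureTheory.volume)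
    (hf.integrableOn_Icc.mono_set (uIcc_of_le hab).subset)
  rw [uIcc_of_le hab] at hprim
  exact hprim.neg.rexp

lemma hasDerivAt_exp_neg_integral {f : ℝ → ℝ} {a b t : ℝ} (hf : ContinuousOn f (Icc a b))
    (ht : t ∈ Ioo a b) :
    HasDerivAt (fun u => Real.exp (-∫ r in a..u, f r))
      (-f t * Real.exp (-∫ r in a..t, f r)) t := by
  have hint : IntervalIntegrable f MeasureTheory.volume a t :=
    (hf.mono (Icc_subset_Icc le_rfl ht.2.le)).intervalIntegrable_of_Icc ht.1.le
  have hmeas : StronglyMeasurableAtFilter f (nhds t) :=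
    (hf.mono Ioo_subset_Icc_self).stronglyMeasurableAtFilter isOpen_Ioo t ht
  have hcont : ContinuousAt f t := hf.continuousAt (Icc_mem_nhds ht.1 ht.2)
  simpa [mul_comm] using (integral_hasDerivAt_right hint hmeas hcont).neg.exp

theorem stmt_2_general (n M : ℝ) (hn : 0 < n)
    (δ μ ν ν' P Pstar S C V Vstar W Wstar φ : ℝ → ℝ)
    (hδ : ContinuousOn δ (Icc 0 n)) (hμ : ContinuousOn μ (Icc 0 n))
    (hν : ContinuousOn ν (Icc 0 n)) (hν' : ContinuousOn ν' (Icc 0 n))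
    (hP : ContinuousOn P (Icc 0 n)) (hPstar : ContinuousOn Pstar (Icc 0 n))
    (hC : ContinuousOn C (Icc 0 n))
    (hV : ∀ t ∈ Icc (0:ℝ) n,
      HasDerivAt V (δ t * V t + P t - μ t * (S t - V t)) t)
    (hV0 : V 0 = 0) (hVn : V n = M)
    (hVstar : ∀ t ∈ Icc (0:ℝ) n,
      HasDerivAt Vstar
        (δ t * Vstar t + Pstar t - μ t * (S t - Vstar t) - ν t * (C t - Vstar t)) t)
    (hVstar0 : Vstar 0 = 0) (hVstarn : Vstar n = M)
    (hW : ∀ t, W t = -(ν' t) * (C t - V t))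
    (hWstar : ∀ t, Wstar t = (P t - Pstar t) - (ν' t - ν t) * (C t - Vstar t))
    (hφ : ∀ t, φ t = Real.exp (-∫ r in (0:ℝ)..t, (δ r + μ r + ν' r))) :
    ∫ t in (0:ℝ)..n, φ t * W t = ∫ t in (0:ℝ)..n, φ t * Wstar t := by
  have hφ_eq : φ = fun t => Real.exp (-∫ r in (0:ℝ)..t, (δ r + μ r + ν' r)) := funext hφ
  have hforce : ContinuousOn (fun t => δ t + μ t + ν' t) (Icc 0 n) := (hδ.add hμ).add hν'
  have hφc : ContinuousOn φ (Icc 0 n) := hφ_eq ▸ continuousOn_exp_neg_integral hn.le hforce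
  have hVc : ContinuousOn V (Icc 0 n) := fun t ht => (hV t ht).continuousAt.continuousWithinAt
  have hVstarc : ContinuousOn Vstar (Icc 0 n) := fun t ht =>
    (hVstar t ht).continuousAt.continuousWithinAt
  have hWc : ContinuousOn W (Icc 0 n) := funext hW ▸ hν'.neg.mul (hC.sub hVc)
  have hWstarc : ContinuousOn Wstar (Icc 0 n) :=
    funext hWstar ▸ (hP.sub hPstar).sub ((hν'.sub hν).mul (hC.sub hVstarc))
  have hG' : ∀ t ∈ Ioo 0 n,
      HasDerivAt (fun t => φ t * (V t - Vstar t)) (φ t * Wstar t - φ t * W t) t := by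
    intro t ht
    have hφ' := hφ_eq ▸ hasDerivAt_exp_neg_integral hforce ht
    refine (hφ'.mul ((hV t (Ioo_subset_Icc_self ht)).sub
      (hVstar t (Ioo_subset_Icc_self ht)))).congr_deriv ?_
    rw [hW, hWstar, hφ, Pi.sub_apply]
    ring
  exact integral_eq_integral_of_hasDerivAt_sub hn.le (hφc.mul (hVc.sub hVstarc)) hG'
    (by simp [hV0, hVstar0, hVn, hVstarn])
    ((hφc.mul hWc).intervalIntegrable_of_Icc hn.le)
    ((hφc.mul hWstarc).intervalIntegrable_of_Icc hn.le)

/-- Corollary 2: the EPV, on the experience basis, of emerging surplus is the same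
under the premium-basis valuation and the net-premium valuation with lapses. -/
theorem stmt_2 (n M : ℝ) (hn : 0 < n)
    (δ μ ν ν' P Pstar S C V Vstar W Wstar φ : ℝ → ℝ)
    (hδ : ContinuousOn δ (Icc 0 n)) (hμ : ContinuousOn μ (Icc 0 n))
    (hν : ContinuousOn ν (Icc 0 n)) (hν' : ContinuousOn ν' (Icc 0 n))
    (hP : ContinuousOn P (Icc 0 n)) (hPstar : ContinuousOn Pstar (Icc 0 n))
    (hS : ContinuousOn S (Icc 0 n)) (hC : ContinuousOn C (Icc 0 n))
    (hV : ∀ t ∈ Icc (0:ℝ) n,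
      HasDerivAt V (δ t * V t + P t - μ t * (S t - V t)) t)
    (hV0 : V 0 = 0) (hVn : V n = M)
    (hVstar : ∀ t ∈ Icc (0:ℝ) n,
      HasDerivAt Vstar
        (δ t * Vstar t + Pstar t - μ t * (S t - Vstar t) - ν t * (C t - Vstar t)) t)
    (hVstar0 : Vstar 0 = 0) (hVstarn : Vstar n = M)
    (hW : ∀ t, W t = -(ν' t) * (C t - V t))
    (hWstar : ∀ t, Wstar t = (P t - Pstar t) - (ν' t - ν t) * (C t - Vstar t))
    (hφ : ∀ t, φ t = Real.exp (-∫ r in (0:ℝ)..t, (δ r + μ r + ν' r))) :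
    ∫ t in (0:ℝ)..n, φ t * W t = ∫ t in (0:ℝ)..n, φ t * Wstar t :=
  stmt_2_general n M hn δ μ ν ν' P Pstar S C V Vstar W Wstar φ hδ hμ hν hν' hP hPstar hC hV hV0 hVn
    hVstar hVstar0 hVstarn hW hWstar hφ
end

section
/- Let V and V* satisfy the two Thiele equations (without and with lapses respectively) with the same boundary values V(0) = V*(0) = 0 and V(n) = V*(n) = M, and let φ̃ : [0,n] → ℝ be any differentiable strictly positive function. Then ∫₀ⁿ d/dt (φ̃(t)·(V*(t) − V(t))) dt = 0, and in particular, taking φ̃(t) = exp(−∫₀ᵗ (δ(r)+μ(r)+ν(r)) dr), one obtains ∫₀ⁿ φ̃(t)·(P(t) − P*(t)) dt = ∫₀ⁿ φ̃(t)·ν(t)·(V(t) − C(t)) dt when the experience lapse rate is taken equal to ν. -/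
/-!
With `F(t) = ∫₀ᵗ (δ + μ + ν)`, subtracting the two Thiele equations shows that the discounted
reserve difference `exp (-F) · (V* - V)` has derivative `exp (-F) · (P* - P + ν (V - C))`:
the terms in `δ`, `μ`, `S` and `V*` cancel against `F' = δ + μ + ν`. Since `V` and `V*` share
their boundary values, the discounted difference vanishes at both ends, so the fundamental
theorem of calculus gives both identities.
-/

open Set intervalIntegral

theorem integral_deriv_eq_zero_of_eq {f : ℝ → ℝ} {a b : ℝ}
    (hf : ∀ x ∈ uIcc a b, DifferentiableAt ℝ f x) (hab : f a = f b) :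
    ∫ x in a..b, deriv f x = 0 := by
  by_cases hint : IntervalIntegrable (deriv f) MeasureTheory.volume a b
  · rw [integral_deriv_eq_sub hf hint, hab, sub_self]
  · exact integral_undef hint

theorem hasDerivAt_integral_of_continuousOn_Icc {g : ℝ → ℝ} {a b t : ℝ}
    (hg : ContinuousOn g (Icc a b)) (ht : t ∈ Ioo a b) :
    HasDerivAt (fun u => ∫ r in a..u, g r) (g t) t := by
  have hIoo : ContinuousOn g (Ioo a b) := hg.mono Ioo_subset_Icc_self
  refine integral_hasDerivAt_right ?_
    (hIoo.stronglyMeasurableAtFilter isOpen_Ioo t ht)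
    (hIoo.continuousAt (isOpen_Ioo.mem_nhds ht))
  exact (hg.mono (Icc_subset_Icc le_rfl ht.2.le)).intervalIntegrable_of_Icc ht.1.le

section Thiele

variable {δ μ ν P Pstar S C V Vstar : ℝ → ℝ}

theorem hasDerivAt_exp_neg_mul_reserve_sub {F : ℝ → ℝ} {t : ℝ}
    (hF : HasDerivAt F (δ t + μ t + ν t) t)
    (hV : HasDerivAt V (δ t * V t + P t - μ t * (S t - V t)) t)
    (hVstar : HasDerivAt Vstar
      (δ t * Vstar t + Pstar t - μ t * (S t - Vstar t) - ν t * (C t - Vstar t)) t) :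
    HasDerivAt (fun s => Real.exp (-F s) * (Vstar s - V s))
      (Real.exp (-F t) * (Pstar t - P t + ν t * (V t - C t))) t := by
  exact (hF.neg.exp.mul (hVstar.sub hV)).congr_deriv
    (by simp only [Pi.neg_apply, Pi.sub_apply]; ring)

theorem integral_exp_neg_mul_premium_sub_eq {a b : ℝ} (hab : a ≤ b)
    (hδ : ContinuousOn δ (Icc a b)) (hμ : ContinuousOn μ (Icc a b))
    (hν : ContinuousOn ν (Icc a b)) (hP : ContinuousOn P (Icc a b))
    (hPstar : ContinuousOn Pstar (Icc a b)) (hC : ContinuousOn C (Icc a b))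
    (hV : ∀ t ∈ Icc a b, HasDerivAt V (δ t * V t + P t - μ t * (S t - V t)) t)
    (hVstar : ∀ t ∈ Icc a b, HasDerivAt Vstar
      (δ t * Vstar t + Pstar t - μ t * (S t - Vstar t) - ν t * (C t - Vstar t)) t)
    (ha : Vstar a = V a) (hb : Vstar b = V b) :
    (∫ t in a..b, Real.exp (-∫ r in a..t, (δ r + μ r + ν r)) * (P t - Pstar t))
      = ∫ t in a..b, Real.exp (-∫ r in a..t, (δ r + μ r + ν r)) * ν t * (V t - C t) := by
  set φ := fun t => Real.exp (-∫ r in a..t, (δ r + μ r + ν r))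
  have hg : ContinuousOn (fun r => δ r + μ r + ν r) (Icc a b) := (hδ.add hμ).add hν
  have hφ : ContinuousOn φ (Icc a b) := by
    have hF : ContinuousOn (fun t => ∫ r in a..t, (δ r + μ r + ν r)) (uIcc a b) :=
      continuousOn_primitive_interval (by rw [uIcc_of_le hab]; exact hg.integrableOn_Icc)
    rw [uIcc_of_le hab] at hF
    exact hF.neg.rexp
  have hVc : ContinuousOn V (Icc a b) := fun t ht =>
    (hV t ht).continuousAt.continuousWithinAt
  have hVstarc : ContinuousOn Vstar (Icc a b) := fun t ht =>
    (hVstar t ht).continuousAt.continuousWithinAt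
  have hlapse : ContinuousOn (fun t => φ t * ν t * (V t - C t)) (Icc a b) :=
    (hφ.mul hν).mul (hVc.sub hC)
  have hderiv : ContinuousOn (fun t => φ t * (Pstar t - P t + ν t * (V t - C t))) (Icc a b) :=
    hφ.mul ((hPstar.sub hP).add (hν.mul (hVc.sub hC)))
  have hFTC : ∫ t in a..b, φ t * (Pstar t - P t + ν t * (V t - C t)) = 0 := by
    rw [integral_eq_sub_of_hasDerivAt_of_le hab (hφ.mul (hVstarc.sub hVc))
      (fun t ht => hasDerivAt_exp_neg_mul_reserve_sub
        (hasDerivAt_integral_of_continuousOn_Icc hg ht)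
        (hV t (Ioo_subset_Icc_self ht)) (hVstar t (Ioo_subset_Icc_self ht)))
      (hderiv.intervalIntegrable_of_Icc hab)]
    simp [ha, hb]
  calc (∫ t in a..b, φ t * (P t - Pstar t))
      = ∫ t in a..b, (φ t * ν t * (V t - C t)
          - φ t * (Pstar t - P t + ν t * (V t - C t))) :=
        integral_congr fun t _ => by ring
    _ = ∫ t in a..b, φ t * ν t * (V t - C t) := by
        rw [integral_sub (hlapse.intervalIntegrable_of_Icc hab)
          (hderiv.intervalIntegrable_of_Icc hab), hFTC, sub_zero]

end Thiele

theorem stmt_11_general (n M : ℝ) (hn : 0 < n)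
    (δ μ ν P Pstar S C V Vstar φt : ℝ → ℝ)
    (hδ : ContinuousOn δ (Icc 0 n)) (hμ : ContinuousOn μ (Icc 0 n))
    (hν : ContinuousOn ν (Icc 0 n)) (hP : ContinuousOn P (Icc 0 n))
    (hPstar : ContinuousOn Pstar (Icc 0 n))
    (hC : ContinuousOn C (Icc 0 n))
    (hV : ∀ t ∈ Icc (0:ℝ) n,
      HasDerivAt V (δ t * V t + P t - μ t * (S t - V t)) t)
    (hV0 : V 0 = 0) (hVn : V n = M)
    (hVstar : ∀ t ∈ Icc (0:ℝ) n,
      HasDerivAt Vstar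
        (δ t * Vstar t + Pstar t - μ t * (S t - Vstar t) - ν t * (C t - Vstar t)) t)
    (hVstar0 : Vstar 0 = 0) (hVstarn : Vstar n = M)
    (hφdiff : Differentiable ℝ φt) :
    (∫ t in (0:ℝ)..n, deriv (fun s => φt s * (Vstar s - V s)) t) = 0
      ∧ ((∫ t in (0:ℝ)..n,
            Real.exp (-∫ r in (0:ℝ)..t, (δ r + μ r + ν r)) * (P t - Pstar t))
          = ∫ t in (0:ℝ)..n,
              Real.exp (-∫ r in (0:ℝ)..t, (δ r + μ r + ν r)) * ν t
                * (V t - C t)) := by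
  have hIcc : uIcc 0 n = Icc 0 n := uIcc_of_le hn.le
  refine ⟨integral_deriv_eq_zero_of_eq (fun t ht => ?_) (by simp [hV0, hVn, hVstar0, hVstarn]),
    integral_exp_neg_mul_premium_sub_eq hn.le hδ hμ hν hP hPstar hC hV hVstar
      (hVstar0.trans hV0.symm) (hVstarn.trans hVn.symm)⟩
  rw [hIcc] at ht
  exact (hφdiff t).mul ((hVstar t ht).differentiableAt.sub (hV t ht).differentiableAt)

/-- The integrated derivative of φ̃·(V*−V) vanishes for any positive differentiable
discount function φ̃, and the particular choice φ̃ = exp(−∫(δ+μ+ν)) yields the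
premium-reduction identity when the experience lapse rate equals ν. -/
theorem stmt_11 (n M : ℝ) (hn : 0 < n)
    (δ μ ν P Pstar S C V Vstar φt : ℝ → ℝ)
    (hδ : ContinuousOn δ (Icc 0 n)) (hμ : ContinuousOn μ (Icc 0 n))
    (hν : ContinuousOn ν (Icc 0 n)) (hP : ContinuousOn P (Icc 0 n))
    (hPstar : ContinuousOn Pstar (Icc 0 n)) (hS : ContinuousOn S (Icc 0 n))
    (hC : ContinuousOn C (Icc 0 n))
    (hV : ∀ t ∈ Icc (0:ℝ) n,
      HasDerivAt V (δ t * V t + P t - μ t * (S t - V t)) t)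
    (hV0 : V 0 = 0) (hVn : V n = M)
    (hVstar : ∀ t ∈ Icc (0:ℝ) n,
      HasDerivAt Vstar
        (δ t * Vstar t + Pstar t - μ t * (S t - Vstar t) - ν t * (C t - Vstar t)) t)
    (hVstar0 : Vstar 0 = 0) (hVstarn : Vstar n = M)
    (hφdiff : Differentiable ℝ φt) (hφpos : ∀ t, 0 < φt t) :
    (∫ t in (0:ℝ)..n, deriv (fun s => φt s * (Vstar s - V s)) t) = 0
      ∧ ((∫ t in (0:ℝ)..n,
            Real.exp (-∫ r in (0:ℝ)..t, (δ r + μ r + ν r)) * (P t - Pstar t))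
          = ∫ t in (0:ℝ)..n,
              Real.exp (-∫ r in (0:ℝ)..t, (δ r + μ r + ν r)) * ν t
                * (V t - C t)) :=
  stmt_11_general n M hn δ μ ν P Pstar S C V Vstar φt hδ hμ hν hP hPstar hC hV hV0 hVn hVstar
    hVstar0 hVstarn hφdiff
end
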